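/- arXiv:math/9804063 — 7 statements merged into one kernel-verified Lean document; each statement's English description precedes it below -/
import Mathlib

section
/- Let M be an infinite subset of ℕ, let {P₁, P₂} be a partition of the set [M]^{<ω} of all finite subsets of M, let ξ be a countable ordinal, and let ℒ be a ξ-uniform family on M. Then there exists an infinite subset L of M such that either ℒ ∩ [L]^{<ω} ⊆ P₁ or ℒ ∩ [L]^{<ω} ⊆ P₂. -/
open Ordinal Filter Set

/-- `FinLT s t` : every element of `s` is smaller than every element of `t`
(i.e. `max s < min t`, vacuously true if one of them is empty). -/
def FinLT (s t : Finset ℕ) : Prop := ∀ a ∈ s, ∀ b ∈ t, a < b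

/-- `s` is an initial segment of `t`  (`s ⪯ t`). -/
def InitSeg (s t : Finset ℕ) : Prop :=
  s ⊆ t ∧ ∀ a ∈ t, ∀ b ∈ s, a ≤ b → a ∈ s

/-- `s` is a proper initial segment of `t`  (`s ≺ t`). -/
def PInitSeg (s t : Finset ℕ) : Prop := InitSeg s t ∧ s ≠ t

/-- `[M]^{<ω}` : the finite subsets of `M`. -/
def FinSubs (M : Set ℕ) : Set (Finset ℕ) := {s | ↑s ⊆ M}

/-- `ℒ(m) = {s : {m} ∪ s ∈ ℒ and {m} < s}`. -/
def famAt (L : Set (Finset ℕ)) (m : ℕ) : Set (Finset ℕ) :=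
  {s | insert m s ∈ L ∧ ∀ a ∈ s, m < a}

/-- `ℒ*` : the family of initial segments of elements of `ℒ`. -/
def famStar (L : Set (Finset ℕ)) : Set (Finset ℕ) := {t | ∃ s ∈ L, InitSeg t s}

/-- `ℒ_*` : the family of subsets of elements of `ℒ`. -/
def famSub (L : Set (Finset ℕ)) : Set (Finset ℕ) := {t | ∃ s ∈ L, t ⊆ s}

/-- A family is Sperner if no element is a proper subset of another. -/
def Sperner (L : Set (Finset ℕ)) : Prop := ¬ ∃ s ∈ L, ∃ t ∈ L, s ⊂ t

/-- A family is hereditary if it is closed under taking subsets. -/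
def Hereditary (F : Set (Finset ℕ)) : Prop := ∀ s ∈ F, ∀ t ⊆ s, t ∈ F

/-- `IsUniform ξ ℒ M` : `ℒ` is a `ξ`-uniform family on `M`. -/
inductive IsUniform : Ordinal.{0} → Set (Finset ℕ) → Set ℕ → Prop
  | zero (M : Set ℕ) : IsUniform 0 {(∅ : Finset ℕ)} M
  | succ (ζ : Ordinal.{0}) (L : Set (Finset ℕ)) (M : Set ℕ)
      (hsub : L ⊆ FinSubs M) (hne : (∅ : Finset ℕ) ∉ L)
      (h : ∀ m ∈ M, IsUniform ζ (famAt L m) (M ∩ Set.Ioi m)) :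
      IsUniform (ζ + 1) L M
  | limit (ξ : Ordinal.{0}) (L : Set (Finset ℕ)) (M : Set ℕ)
      (hlim : Order.IsSuccLimit ξ)
      (hsub : L ⊆ FinSubs M) (hne : (∅ : Finset ℕ) ∉ L)
      (ξm : ℕ → Ordinal.{0})
      (hmono : ∀ m ∈ M, ∀ n ∈ M, m < n → ξm m < ξm n)
      (hlt : ∀ m ∈ M, ξm m < ξ)
      (hsup : ∀ β < ξ, ∃ m ∈ M, β ≤ ξm m)
      (h : ∀ m ∈ M, IsUniform (ξm m) (famAt L m) (M ∩ Set.Ioi m)) :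
      IsUniform ξ L M

/-- The characteristic function of a finite set, as an element of the
product space `ℕ → Bool` (i.e. `2^ℕ`). -/
def toChar (s : Finset ℕ) : ℕ → Bool := fun n => decide (n ∈ s)

/-- A family of finite subsets of `ℕ` is pointwise closed if its image in `2^ℕ`
(under characteristic functions) is closed in the product topology. -/
def PtwiseClosed (F : Set (Finset ℕ)) : Prop := IsClosed (toChar '' F)

/-- The first strong Cantor--Bendixson derivative of `F` on `M`:
the set of `A ∈ F ∩ [M]^{<ω}` such that `A` is a cluster point (in `2^ℕ`) of
`{B ∈ F : B ⊆ A ∪ L}` for every infinite `L ⊆ M`. -/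
def derivOne (M : Set ℕ) (F : Set (Finset ℕ)) : Set (Finset ℕ) :=
  {A | A ∈ F ∧ ↑A ⊆ M ∧ ∀ L : Set ℕ, L ⊆ M → L.Infinite →
    AccPt (toChar A) (𝓟 (toChar '' {B | B ∈ F ∧ ↑B ⊆ ↑A ∪ L}))}

/-- The iterated strong Cantor--Bendixson derivatives `(F)^ξ_M`. -/
noncomputable def CBDeriv (F : Set (Finset ℕ)) (M : Set ℕ) (o : Ordinal.{0}) :
    Set (Finset ℕ) :=
  Ordinal.limitRecOn o F (fun _ ih => derivOne M ih)
    (fun o _ ih => ⋂ (β : Ordinal.{0}) (h : β < o), ih β h)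

/-- The strong Cantor--Bendixson index `s_M(F)` : the least ordinal `ξ`
with `(F)^ξ_M = ∅`. -/
noncomputable def CBIndex (F : Set (Finset ℕ)) (M : Set ℕ) : Ordinal.{0} :=
  sInf {o : Ordinal.{0} | CBDeriv F M o = ∅}

/-!
A uniform family is built by recursion from its sections `ℒ(m)`, so the theorem follows by
induction on the derivation of uniformity, for an arbitrary finite colouring. For the inductive
step one fuses the sections: starting from `N`, repeatedly take `m = min N`, shrink `N ∩ (m, ∞)`
to make `ℒ(m)` monochromatic, and record `m` together with its colour. The recorded points form an
increasing sequence `μ`; the colour attached to any member of `ℒ` on `{μ i}` is the one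
recorded at its least element, so pigeonholing the recorded colours finishes the step.
-/

section Fusion

variable {α : Type*} {𝓛 : Set (Finset ℕ)} {c : Finset ℕ → α}

lemma exists_mem_eq_of_mem_inter_finSubs_image (hne : ∅ ∉ 𝓛) {μ : ℕ → ℕ} (hμ : StrictMono μ)
    {g : ℕ → Set ℕ} (hμg : ∀ i j, i < j → μ j ∈ g (i + 1)) {a : ℕ → α}
    (ha : ∀ i, famAt 𝓛 (μ i) ∩ FinSubs (g (i + 1)) ⊆ (fun s => c (insert (μ i) s)) ⁻¹' {a i})
    (I : Set ℕ) {s : Finset ℕ} (hs : s ∈ 𝓛 ∩ FinSubs (μ '' I)) : ∃ i ∈ I, c s = a i := by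
  classical
  obtain ⟨hs𝓛, hsI⟩ := hs
  have hsne : s.Nonempty := Finset.nonempty_iff_ne_empty.2 fun h => hne (h ▸ hs𝓛)
  obtain ⟨i, hiI, hi⟩ := hsI (s.min'_mem hsne)
  have hins : insert (μ i) (s.erase (μ i)) = s := Finset.insert_erase (hi ▸ s.min'_mem hsne)
  have hgt : ∀ x ∈ s.erase (μ i), μ i < x := fun x hx =>
    lt_of_le_of_ne (hi ▸ s.min'_le x (Finset.mem_of_mem_erase hx)) (Finset.ne_of_mem_erase hx).symm
  have hsec : s.erase (μ i) ∈ famAt 𝓛 (μ i) := ⟨hins.symm ▸ hs𝓛, hgt⟩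
  have htail : s.erase (μ i) ∈ FinSubs (g (i + 1)) := by
    intro x hx
    obtain ⟨j, -, rfl⟩ := hsI (Finset.mem_of_mem_erase hx)
    exact hμg i j (hμ.lt_iff_lt.1 (hgt _ hx))
  refine ⟨i, hiI, ?_⟩
  have := ha i ⟨hsec, htail⟩
  rwa [Set.mem_preimage, hins] at this

variable [Finite α]

lemma exists_infinite_subset_monochromatic_of_famAt (hne : ∅ ∉ 𝓛) {N : Set ℕ}
    (hN : N.Infinite)
    (H : ∀ m ∈ N, ∀ X ⊆ N ∩ Ioi m, X.Infinite → ∃ L ⊆ X, L.Infinite ∧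
      ∃ a, famAt 𝓛 m ∩ FinSubs L ⊆ (fun s => c (insert m s)) ⁻¹' {a}) :
    ∃ L ⊆ N, L.Infinite ∧ ∃ a, 𝓛 ∩ FinSubs L ⊆ c ⁻¹' {a} := by
  have step : ∀ X : {X : Set ℕ // X ⊆ N ∧ X.Infinite}, ∃ Y : {X : Set ℕ // X ⊆ N ∧ X.Infinite},
      Y.1 ⊆ X.1 ∩ Ioi (sInf X.1) ∧ ∃ a,
        famAt 𝓛 (sInf X.1) ∩ FinSubs Y.1 ⊆ (fun s => c (insert (sInf X.1) s)) ⁻¹' {a} := by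
    rintro ⟨X, hXN, hX⟩
    have hm : sInf X ∈ X := Nat.sInf_mem hX.nonempty
    have hXgt : (X ∩ Ioi (sInf X)).Infinite :=
      (hX.sdiff (finite_Iic (sInf X))).mono fun x hx => ⟨hx.1, by simpa using hx.2⟩
    obtain ⟨L, hLX, hL, a, ha⟩ :=
      H _ (hXN hm) _ (inter_subset_inter_left _ hXN) hXgt
    exact ⟨⟨L, hLX.trans (inter_subset_left.trans hXN), hL⟩, hLX, a, ha⟩
  choose next hnext a ha using step
  set G : ℕ → {X : Set ℕ // X ⊆ N ∧ X.Infinite} := fun i => next^[i] ⟨N, subset_rfl, hN⟩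
  have hGsucc : ∀ i, G (i + 1) = next (G i) := fun i => Function.iterate_succ_apply' _ _ _
  set μ : ℕ → ℕ := fun i => sInf (G i).1
  have hμG : ∀ i, μ i ∈ (G i).1 := fun i => Nat.sInf_mem (G i).2.2.nonempty
  have hGanti : Antitone fun i => (G i).1 := antitone_nat_of_succ_le fun i =>
    (hGsucc i ▸ hnext (G i)).trans inter_subset_left
  have hμg : ∀ i j, i < j → μ j ∈ (G (i + 1)).1 := fun i j hij => hGanti hij (hμG j)
  have hμ : StrictMono μ := strictMono_nat_of_lt_succ fun i =>
    ((hGsucc i ▸ hnext (G i)) (hμG (i + 1))).2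
  obtain ⟨b, hb⟩ := Finite.exists_infinite_fiber fun i => a (G i)
  refine ⟨μ '' ((fun i => a (G i)) ⁻¹' {b}), ?_, ?_, b, ?_⟩
  · rintro _ ⟨i, -, rfl⟩
    exact (G i).2.1 (hμG i)
  · exact (Set.infinite_coe_iff.1 hb).image hμ.injective.injOn
  · intro s hs
    obtain ⟨i, hi, hcs⟩ := exists_mem_eq_of_mem_inter_finSubs_image (g := fun i => (G i).1)
      (a := fun i => a (G i)) hne hμ hμg (fun i => hGsucc i ▸ ha (G i)) _ hs
    exact hcs.trans hi

theorem IsUniform.exists_infinite_subset_monochromatic {ξ : Ordinal.{0}} {M : Set ℕ}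
    (h𝓛 : IsUniform ξ 𝓛 M) (c : Finset ℕ → α) {N : Set ℕ} (hNM : N ⊆ M) (hN : N.Infinite) :
    ∃ L ⊆ N, L.Infinite ∧ ∃ a, 𝓛 ∩ FinSubs L ⊆ c ⁻¹' {a} := by
  induction h𝓛 generalizing c N with
  | zero =>
    refine ⟨N, subset_rfl, hN, c ∅, ?_⟩
    rintro s ⟨rfl, -⟩
    rfl
  | succ _ _ _ _ hne _ ih | limit _ _ _ _ _ hne _ _ _ _ _ ih =>
    exact exists_infinite_subset_monochromatic_of_famAt hne hN fun m hm X hX hXinf =>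
      ih m (hNM hm) _ (hX.trans (inter_subset_inter_left _ hNM)) hXinf

end Fusion

theorem ramsey_dichotomy_uniform_general (M : Set ℕ) (hM : M.Infinite)
    (P₁ P₂ : Set (Finset ℕ)) (hunion : P₁ ∪ P₂ = FinSubs M)
    (ξ : Ordinal.{0})
    (𝓛 : Set (Finset ℕ)) (h𝓛 : IsUniform ξ 𝓛 M) :
    ∃ L : Set ℕ, L ⊆ M ∧ L.Infinite ∧
      (𝓛 ∩ FinSubs L ⊆ P₁ ∨ 𝓛 ∩ FinSubs L ⊆ P₂) := by
  classical
  obtain ⟨L, hLM, hL, b, hb⟩ :=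
    h𝓛.exists_infinite_subset_monochromatic (fun s => decide (s ∈ P₁)) subset_rfl hM
  refine ⟨L, hLM, hL, ?_⟩
  cases b
  · refine Or.inr fun s hs => ?_
    have hsM : s ∈ P₁ ∪ P₂ := hunion ▸ fun x hx => hLM (hs.2 hx)
    exact hsM.resolve_left (by simpa using hb hs)
  · exact Or.inl fun s hs => by simpa using hb hs

/-- **Theorem 2.2.** If `{P₁, P₂}` is a partition of `[M]^{<ω}` and `ℒ` is a
`ξ`-uniform family on the infinite set `M`, then there is an infinite `L ⊆ M`
with `ℒ ∩ [L]^{<ω} ⊆ P₁` or `ℒ ∩ [L]^{<ω} ⊆ P₂`. -/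
theorem ramsey_dichotomy_uniform (M : Set ℕ) (hM : M.Infinite)
    (P₁ P₂ : Set (Finset ℕ)) (hunion : P₁ ∪ P₂ = FinSubs M) (hdisj : P₁ ∩ P₂ = ∅)
    (ξ : Ordinal.{0}) (hξ : ξ.card ≤ Cardinal.aleph0)
    (𝓛 : Set (Finset ℕ)) (h𝓛 : IsUniform ξ 𝓛 M) :
    ∃ L : Set ℕ, L ⊆ M ∧ L.Infinite ∧
      (𝓛 ∩ FinSubs L ⊆ P₁ ∨ 𝓛 ∩ FinSubs L ⊆ P₂) :=
  ramsey_dichotomy_uniform_general M hM P₁ P₂ hunion ξ 𝓛 h𝓛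
end

section
/- Let ξ be a countable ordinal, M an infinite subset of ℕ, and ℒ a ξ-uniform family on M. For every infinite subset N of M and every partition {P₁, …, P_k} of [N]^{<ω} into finitely many parts, there exist an infinite subset L of N and an index i ∈ {1, …, k} such that ℒ ∩ [L]^{<ω} ⊆ P_i. -/
open Ordinal Filter Set

/-!
A family `ℒ` is *Ramsey* on `M` if every 2-colouring of the finite sets becomes constant on
`ℒ ∩ [L]^{<ω}` for some infinite `L` inside any given infinite `N ⊆ M`; iterating over the colours
gives the statement for finite partitions. Uniform families are Ramsey by induction on the
definition: if every `ℒ(m)` is Ramsey, a diagonal argument produces `m₀ < m₁ < ⋯` in `N` such that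
the colour of `{mₙ} ∪ s` is constant for `s ∈ ℒ(mₙ)` made of later terms, and infinitely many
`n` share the same such constant colour.
-/

def IsRamsey (𝓛 : Set (Finset ℕ)) (M : Set ℕ) : Prop :=
  ∀ N ⊆ M, N.Infinite → ∀ S : Set (Finset ℕ),
    ∃ L ⊆ N, L.Infinite ∧ (𝓛 ∩ FinSubs L ⊆ S ∨ 𝓛 ∩ FinSubs L ⊆ Sᶜ)

lemma Set.Infinite.inter_Ioi {α : Type*} [LinearOrder α] [LocallyFiniteOrderBot α] {A : Set α}
    (hA : A.Infinite) (a : α) : (A ∩ Ioi a).Infinite :=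
  (hA.sdiff (finite_Iic a)).mono fun _ hx => ⟨hx.1, lt_of_not_ge hx.2⟩

lemma finSubs_mono {A B : Set ℕ} (h : A ⊆ B) : FinSubs A ⊆ FinSubs B :=
  fun _ hs => hs.trans h

lemma isRamsey_singleton_empty (M : Set ℕ) : IsRamsey {∅} M := by
  intro N _ hN S
  refine ⟨N, subset_rfl, hN, ?_⟩
  by_cases h : ∅ ∈ S
  · exact Or.inl fun s hs => hs.1 ▸ h
  · exact Or.inr fun s hs => hs.1 ▸ h

lemma erase_min'_mem_famAt {𝓛 : Set (Finset ℕ)} {s : Finset ℕ} (hs : s ∈ 𝓛)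
    (hne : s.Nonempty) : s.erase (s.min' hne) ∈ famAt 𝓛 (s.min' hne) := by
  refine ⟨by rwa [Finset.insert_erase (s.min'_mem hne)], fun a ha => ?_⟩
  exact lt_of_le_of_ne (s.min'_le a (Finset.mem_of_mem_erase ha)) (Finset.ne_of_mem_erase ha).symm

theorem exists_strictMono_forall_image_Ioi {N : Set ℕ} (hN : N.Infinite)
    (Q : ℕ → Set ℕ → Prop) (hQ : ∀ m ⦃B B' : Set ℕ⦄, B' ⊆ B → Q m B → Q m B')
    (h : ∀ A ⊆ N, A.Infinite → ∃ B ⊆ A, B.Infinite ∧ Q (sInf A) B) :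
    ∃ m : ℕ → ℕ, StrictMono m ∧ (∀ n, m n ∈ N) ∧ ∀ n, Q (m n) (m '' Ioi n) := by
  choose B hBA hBinf hBQ using h
  let T := {A : Set ℕ // A ⊆ N ∧ A.Infinite}
  let next : T → T := fun A =>
    ⟨B A.1 A.2.1 A.2.2 ∩ Ioi (sInf A.1), inter_subset_left.trans ((hBA ..).trans A.2.1),
      (hBinf A.1 A.2.1 A.2.2).inter_Ioi _⟩
  let A : ℕ → Set ℕ := fun n => (next^[n] ⟨N, subset_rfl, hN⟩).1
  have hA : ∀ n, A n ⊆ N ∧ (A n).Infinite := fun n => (next^[n] _).2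
  have hA_succ : ∀ n, A (n + 1) = B (A n) (hA n).1 (hA n).2 ∩ Ioi (sInf (A n)) := fun n => by
    simp only [A, Function.iterate_succ_apply']
    rfl
  have hA_succ_subset : ∀ n, A (n + 1) ⊆ A n ∩ Ioi (sInf (A n)) := fun n =>
    hA_succ n ▸ inter_subset_inter_left _ (hBA ..)
  have hA_succ_Q : ∀ n, Q (sInf (A n)) (A (n + 1)) := fun n =>
    hQ _ (hA_succ n ▸ inter_subset_left) (hBQ ..)
  have hmem : ∀ n, sInf (A n) ∈ A n := fun n => Nat.sInf_mem (hA n).2.nonempty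
  have hanti : Antitone A :=
    antitone_nat_of_succ_le fun n => (hA_succ_subset n).trans inter_subset_left
  refine ⟨fun n => sInf (A n), strictMono_nat_of_lt_succ fun n => (hA_succ_subset n (hmem _)).2,
    fun n => (hA n).1 (hmem n), fun n => hQ _ ?_ (hA_succ_Q n)⟩
  rintro _ ⟨j, hj, rfl⟩
  exact hanti (Nat.succ_le_of_lt hj) (hmem j)

/-- Write `s` as `{mₙ} ∪ s'` with `mₙ = min s`, `n ∈ J`, `s' ∈ ℒ(mₙ)` and `s' ⊆ {mⱼ : j > n}`. -/
lemma subset_of_forall_famAt_subset {𝓛 T : Set (Finset ℕ)} (hne : ∅ ∉ 𝓛) {m : ℕ → ℕ}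
    (hm : StrictMono m) {J : Set ℕ}
    (hJ : ∀ n ∈ J, famAt 𝓛 (m n) ∩ FinSubs (m '' Ioi n) ⊆ insert (m n) ⁻¹' T) :
    𝓛 ∩ FinSubs (m '' J) ⊆ T := by
  rintro s ⟨hs𝓛, hsJ⟩
  have hs : s.Nonempty := Finset.nonempty_iff_ne_empty.mpr fun h => hne (h ▸ hs𝓛)
  obtain ⟨n, hnJ, hn⟩ := hsJ (s.min'_mem hs)
  have hfam := erase_min'_mem_famAt hs𝓛 hs
  rw [← hn] at hfam
  have htail : s.erase (m n) ∈ FinSubs (m '' Ioi n) := by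
    intro x hx
    obtain ⟨j, -, rfl⟩ := hsJ (Finset.mem_of_mem_erase hx)
    exact ⟨j, hm.lt_iff_lt.mp (hfam.2 _ hx), rfl⟩
  have := hJ n hnJ ⟨hfam, htail⟩
  rwa [mem_preimage, Finset.insert_erase (hn ▸ s.min'_mem hs)] at this

theorem isRamsey_of_forall_famAt {𝓛 : Set (Finset ℕ)} {M : Set ℕ} (hne : ∅ ∉ 𝓛)
    (h : ∀ m ∈ M, IsRamsey (famAt 𝓛 m) (M ∩ Ioi m)) : IsRamsey 𝓛 M := by
  intro N hNM hN S
  let Q : ℕ → Set ℕ → Prop := fun m B =>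
    famAt 𝓛 m ∩ FinSubs B ⊆ insert m ⁻¹' S ∨ famAt 𝓛 m ∩ FinSubs B ⊆ insert m ⁻¹' Sᶜ
  have hQ : ∀ m ⦃B B' : Set ℕ⦄, B' ⊆ B → Q m B → Q m B' := fun m B B' hB hQ =>
    have hsub := inter_subset_inter_right (famAt 𝓛 m) (finSubs_mono hB)
    hQ.imp hsub.trans hsub.trans
  obtain ⟨m, hm, hmN, hmQ⟩ := exists_strictMono_forall_image_Ioi hN Q hQ fun A hAN hA => by
    have hsInf : sInf A ∈ M := hNM (hAN (Nat.sInf_mem hA.nonempty))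
    obtain ⟨B, hB, hBinf, hBQ⟩ := h _ hsInf _ (inter_subset_inter_left _ (hAN.trans hNM))
      (hA.inter_Ioi _) (insert (sInf A) ⁻¹' S)
    exact ⟨B, hB.trans inter_subset_left, hBinf, hBQ⟩
  have hinf : {n | Q (m n) (m '' Ioi n)}.Infinite := by
    rw [eq_univ_of_forall hmQ]
    exact infinite_univ
  rw [ofPred_or, infinite_union] at hinf
  have himage : ∀ J : Set ℕ, m '' J ⊆ N := by
    rintro J _ ⟨n, -, rfl⟩
    exact hmN n
  rcases hinf with hJ | hJ
  · exact ⟨_, himage _, hJ.image hm.injective.injOn, Or.inl (subset_of_forall_famAt_subset hne hm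
      fun _ hn => hn)⟩
  · exact ⟨_, himage _, hJ.image hm.injective.injOn, Or.inr (subset_of_forall_famAt_subset hne hm
      fun _ hn => hn)⟩

theorem IsUniform.isRamsey {ξ : Ordinal.{0}} {𝓛 : Set (Finset ℕ)} {M : Set ℕ}
    (h : IsUniform ξ 𝓛 M) : IsRamsey 𝓛 M := by
  induction h with
  | zero M => exact isRamsey_singleton_empty M
  | succ _ _ _ _ hne _ ih => exact isRamsey_of_forall_famAt hne ih
  | limit _ _ _ _ _ hne _ _ _ _ _ ih => exact isRamsey_of_forall_famAt hne ih

theorem IsRamsey.exists_subset_of_subset_biUnion {ι : Type*} {𝓛 : Set (Finset ℕ)} {M : Set ℕ}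
    (h𝓛 : IsRamsey 𝓛 M) (P : ι → Set (Finset ℕ)) {s : Finset ι} (hs : s.Nonempty) :
    ∀ N ⊆ M, N.Infinite → 𝓛 ∩ FinSubs N ⊆ ⋃ i ∈ s, P i →
      ∃ L ⊆ N, L.Infinite ∧ ∃ i ∈ s, 𝓛 ∩ FinSubs L ⊆ P i := by
  induction hs using Finset.Nonempty.cons_induction with
  | singleton a =>
    intro N _ hN hcover
    exact ⟨N, subset_rfl, hN, a, Finset.mem_singleton_self a, by simpa using hcover⟩
  | cons a s _ _ ih =>
    intro N hNM hN hcover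
    obtain ⟨L, hLN, hL, hLa | hLa⟩ := h𝓛 N hNM hN (P a)
    · exact ⟨L, hLN, hL, a, Finset.mem_cons_self a s, hLa⟩
    have hcover' : 𝓛 ∩ FinSubs L ⊆ ⋃ i ∈ s, P i := fun t ht => by
      obtain ⟨i, hi, hti⟩ := mem_iUnion₂.mp (hcover ⟨ht.1, finSubs_mono hLN ht.2⟩)
      rcases Finset.mem_cons.mp hi with rfl | hi
      · exact absurd hti (hLa ht)
      · exact mem_iUnion₂.mpr ⟨i, hi, hti⟩
    obtain ⟨L', hL'L, hL', i, hi, hL'i⟩ := ih L (hLN.trans hNM) hL hcover'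
    exact ⟨L', hL'L.trans hLN, hL', i, Finset.mem_cons_of_mem hi, hL'i⟩

theorem ramsey_finite_partition_uniform_general (ξ : Ordinal.{0})
    (M : Set ℕ)
    (𝓛 : Set (Finset ℕ)) (h𝓛 : IsUniform ξ 𝓛 M)
    (N : Set ℕ) (hNM : N ⊆ M) (hN : N.Infinite)
    (k : ℕ) (hk : 0 < k) (P : Fin k → Set (Finset ℕ))
    (hunion : (⋃ i, P i) = FinSubs N) :
    ∃ (L : Set ℕ) (i : Fin k), L ⊆ N ∧ L.Infinite ∧ 𝓛 ∩ FinSubs L ⊆ P i := by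
  have : Nonempty (Fin k) := Fin.pos_iff_nonempty.mp hk
  have hcover : 𝓛 ∩ FinSubs N ⊆ ⋃ i ∈ Finset.univ, P i := by
    simp only [Finset.mem_univ, iUnion_true, hunion]
    exact inter_subset_right
  obtain ⟨L, hLN, hL, i, -, hLi⟩ :=
    h𝓛.isRamsey.exists_subset_of_subset_biUnion P Finset.univ_nonempty N hNM hN hcover
  exact ⟨L, i, hLN, hL, hLi⟩

/-- **Corollary 2.3.** For every `ξ`-uniform family `ℒ` on `M`, every infinite
`N ⊆ M` and every finite partition `{P₁, …, P_k}` of `[N]^{<ω}`, there are an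
infinite `L ⊆ N` and an index `i` with `ℒ ∩ [L]^{<ω} ⊆ P_i`. -/
theorem ramsey_finite_partition_uniform (ξ : Ordinal.{0}) (hξ : ξ.card ≤ Cardinal.aleph0)
    (M : Set ℕ) (hM : M.Infinite)
    (𝓛 : Set (Finset ℕ)) (h𝓛 : IsUniform ξ 𝓛 M)
    (N : Set ℕ) (hNM : N ⊆ M) (hN : N.Infinite)
    (k : ℕ) (hk : 0 < k) (P : Fin k → Set (Finset ℕ))
    (hunion : (⋃ i, P i) = FinSubs N)
    (hdisj : ∀ i j, i ≠ j → P i ∩ P j = ∅) :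
    ∃ (L : Set ℕ) (i : Fin k), L ⊆ N ∧ L.Infinite ∧ 𝓛 ∩ FinSubs L ⊆ P i :=
  ramsey_finite_partition_uniform_general ξ M 𝓛 h𝓛 N hNM hN k hk P hunion
end

section
/- Let ℱ be a family of finite subsets of ℕ, M an infinite subset of ℕ, ξ a countable ordinal, and ℒ a ξ-uniform family on M. If ℒ ∩ ℱ ∩ [L]^{<ω} ≠ ∅ for every infinite subset L of M, then for every infinite subset N of M there exists an infinite subset L of N such that ℒ ∩ [L]^{<ω} ⊆ ℱ. -/
open Ordinal Filter Set
/-!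
Uniform families have the Nash-Williams partition property: by induction along the uniform
structure, make each section `𝓛(m)` homogeneous on a tail, fuse these choices into one
increasing sequence, and pigeonhole the colours of its terms. For the partition `F`, `Fᶜ`, the
hitting hypothesis rules out the side disjoint from `F`.
-/

def RamseyOn (𝓛 : Set (Finset ℕ)) (M : Set ℕ) : Prop :=
  ∀ P : Set (Finset ℕ), ∀ N ⊆ M, N.Infinite → ∃ L ⊆ N, L.Infinite ∧
    (𝓛 ∩ FinSubs L ⊆ P ∨ Disjoint (𝓛 ∩ FinSubs L) P)

lemma finSubs_mono_s2 : Monotone FinSubs :=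
  fun _ _ hLL' _ hs => hs.trans hLL'

lemma ramseyOn_singleton_empty (M : Set ℕ) : RamseyOn {∅} M := by
  intro P N _ hN
  refine ⟨N, subset_rfl, hN, ?_⟩
  by_cases hP : ∅ ∈ P
  · exact Or.inl fun s hs => (mem_singleton_iff.1 hs.1) ▸ hP
  · exact Or.inr <| Set.disjoint_left.2 fun s hs => (mem_singleton_iff.1 hs.1) ▸ hP

/-- Fusion: iterate `step`, discarding the minimum each time; `f` lists the minima. -/
lemma exists_strictMono_forall_image_Ioi_s2 {N : Set ℕ} (hN : N.Infinite)
    (Q : ℕ → Set ℕ → Prop) (hQ : ∀ m, Antitone (Q m))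
    (step : ∀ L₀ ⊆ N, L₀.Infinite → ∃ L ⊆ L₀, L.Infinite ∧ Q (sInf L₀) L) :
    ∃ f : ℕ → ℕ, StrictMono f ∧ range f ⊆ N ∧ ∀ n, Q (f n) (f '' Ioi n) := by
  choose g hgsub hginf hgQ using step
  let next (A : {L : Set ℕ // L ⊆ N ∧ L.Infinite}) : {L : Set ℕ // L ⊆ N ∧ L.Infinite} :=
    ⟨g A.1 A.2.1 A.2.2 \ Iic (sInf A.1),
      sdiff_subset.trans ((hgsub _ _ _).trans A.2.1),
      (hginf _ _ _).sdiff (finite_Iic _)⟩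
  let B (n : ℕ) : {L : Set ℕ // L ⊆ N ∧ L.Infinite} := next^[n] ⟨N, subset_rfl, hN⟩
  let f (n : ℕ) : ℕ := sInf (B n).1
  have hB_succ (n : ℕ) : B (n + 1) = next (B n) := Function.iterate_succ_apply' ..
  have hf_mem (n : ℕ) : f n ∈ (B n).1 := Nat.sInf_mem (B n).2.2.nonempty
  have hB_anti : Antitone fun n => (B n).1 := antitone_nat_of_succ_le fun n => by
    rw [hB_succ]; exact sdiff_subset.trans (hgsub _ _ _)
  have hf_lt (n : ℕ) : f n < f (n + 1) := by
    have h := hf_mem (n + 1)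
    rw [hB_succ] at h
    exact not_le.1 h.2
  have hf_image (n : ℕ) : f '' Ioi n ⊆ g (B n).1 (B n).2.1 (B n).2.2 := by
    rintro _ ⟨j, hj, rfl⟩
    have h : f j ∈ (B (n + 1)).1 := hB_anti (Nat.succ_le_of_lt hj) (hf_mem j)
    rw [hB_succ] at h
    exact h.1
  refine ⟨f, strictMono_nat_of_lt_succ hf_lt, ?_, fun n => hQ _ (hf_image n) (hgQ _ _ _)⟩
  rintro _ ⟨n, rfl⟩
  exact hB_anti (Nat.zero_le n) (hf_mem n)

lemma exists_erase_mem_famAt {𝓛 : Set (Finset ℕ)} (hne : ∅ ∉ 𝓛) {f : ℕ → ℕ}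
    (hf : StrictMono f) {J : Set ℕ} {s : Finset ℕ} (hs : s ∈ 𝓛 ∩ FinSubs (f '' J)) :
    ∃ n ∈ J, f n ∈ s ∧ s.erase (f n) ∈ famAt 𝓛 (f n) ∩ FinSubs (f '' Ioi n) := by
  obtain ⟨hs𝓛, hsJ⟩ := hs
  have hsne : s.Nonempty := Finset.nonempty_iff_ne_empty.2 fun h => hne (h ▸ hs𝓛)
  obtain ⟨n, hnJ, hn⟩ := hsJ (s.min'_mem hsne)
  have hfn : f n ∈ s := hn ▸ s.min'_mem hsne
  have hmin : ∀ a ∈ s.erase (f n), f n < a := fun a ha => by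
    rw [hn]
    exact (s.min'_le a (Finset.mem_of_mem_erase ha)).lt_of_ne (hn ▸ Finset.ne_of_mem_erase ha).symm
  refine ⟨n, hnJ, hfn, ⟨⟨?_, hmin⟩, fun a ha => ?_⟩⟩
  · rwa [Finset.insert_erase hfn]
  · obtain ⟨j, -, rfl⟩ := hsJ (Finset.mem_of_mem_erase ha)
    exact ⟨j, hf.lt_iff_lt.1 (hmin _ ha), rfl⟩

/-- Colour each term `m` of the fused sequence by the side on which `𝓛(m)` lands, then keep
the terms of one colour. -/
lemma RamseyOn.of_famAt {𝓛 : Set (Finset ℕ)} {M : Set ℕ} (hne : ∅ ∉ 𝓛)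
    (h : ∀ m ∈ M, RamseyOn (famAt 𝓛 m) (M ∩ Ioi m)) : RamseyOn 𝓛 M := by
  intro P N hNM hN
  let Q (m : ℕ) (L : Set ℕ) : Prop :=
    famAt 𝓛 m ∩ FinSubs L ⊆ famAt P m ∨ Disjoint (famAt 𝓛 m ∩ FinSubs L) (famAt P m)
  have hQ (m : ℕ) : Antitone (Q m) := fun L' L hL => by
    have hsub := inter_subset_inter_right (famAt 𝓛 m) (finSubs_mono_s2 hL)
    exact Or.imp hsub.trans (Disjoint.mono_left hsub)
  have step (L₀ : Set ℕ) (hL₀N : L₀ ⊆ N) (hL₀ : L₀.Infinite) :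
      ∃ L ⊆ L₀, L.Infinite ∧ Q (sInf L₀) L := by
    have hm := Nat.sInf_mem hL₀.nonempty
    have hinf : (L₀ ∩ Ioi (sInf L₀)).Infinite := by
      rw [← compl_Iic, ← sdiff_eq]; exact hL₀.sdiff (finite_Iic _)
    obtain ⟨L, hL, hLinf, hLQ⟩ := h _ (hNM (hL₀N hm)) (famAt P (sInf L₀)) (L₀ ∩ Ioi (sInf L₀))
      (inter_subset_inter_left _ (hL₀N.trans hNM)) hinf
    exact ⟨L, hL.trans inter_subset_left, hLinf, hLQ⟩
  obtain ⟨f, hf, hfN, hfQ⟩ := exists_strictMono_forall_image_Ioi_s2 hN Q hQ step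
  have himage (J : Set ℕ) (hJ : J.Infinite) : f '' J ⊆ N ∧ (f '' J).Infinite :=
    ⟨(image_subset_range f J).trans hfN, hJ.image hf.injective.injOn⟩
  let I : Set ℕ := {n | famAt 𝓛 (f n) ∩ FinSubs (f '' Ioi n) ⊆ famAt P (f n)}
  rcases infinite_union.1 (I.union_compl_self.symm ▸ infinite_univ) with hI | hI
  · refine ⟨f '' I, (himage I hI).1, (himage I hI).2, Or.inl fun s hs => ?_⟩
    obtain ⟨n, hn, hfn, ht⟩ := exists_erase_mem_famAt hne hf hs
    simpa only [Finset.insert_erase hfn] using (hn ht).1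
  · refine ⟨f '' Iᶜ, (himage Iᶜ hI).1, (himage Iᶜ hI).2, Or.inr ?_⟩
    refine Set.disjoint_left.2 fun s hs hsP => ?_
    obtain ⟨n, hn, hfn, ht⟩ := exists_erase_mem_famAt hne hf hs
    refine Set.disjoint_left.1 ((hfQ n).resolve_left hn) ht ⟨?_, ht.1.2⟩
    rwa [Finset.insert_erase hfn]

theorem IsUniform.ramseyOn {ξ : Ordinal.{0}} {𝓛 : Set (Finset ℕ)} {M : Set ℕ}
    (h : IsUniform ξ 𝓛 M) : RamseyOn 𝓛 M := by
  induction h with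
  | zero M => exact ramseyOn_singleton_empty M
  | succ _ _ _ _ hne _ ih => exact RamseyOn.of_famAt hne ih
  | limit _ _ _ _ _ hne _ _ _ _ _ ih => exact RamseyOn.of_famAt hne ih

theorem uniform_subfamily_of_hitting_general (F : Set (Finset ℕ)) (M : Set ℕ)
    (ξ : Ordinal.{0})
    (𝓛 : Set (Finset ℕ)) (h𝓛 : IsUniform ξ 𝓛 M)
    (hhit : ∀ L : Set ℕ, L ⊆ M → L.Infinite → (𝓛 ∩ F ∩ FinSubs L).Nonempty) :
    ∀ N : Set ℕ, N ⊆ M → N.Infinite →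
      ∃ L : Set ℕ, L ⊆ N ∧ L.Infinite ∧ 𝓛 ∩ FinSubs L ⊆ F := by
  intro N hNM hN
  obtain ⟨L, hLN, hL, hLF | hLF⟩ := h𝓛.ramseyOn F N hNM hN
  · exact ⟨L, hLN, hL, hLF⟩
  · obtain ⟨s, ⟨hs𝓛, hsF⟩, hsL⟩ := hhit L (hLN.trans hNM) hL
    exact (Set.disjoint_left.1 hLF ⟨hs𝓛, hsL⟩ hsF).elim

/-- **Corollary 2.4.** If `ℒ` is a `ξ`-uniform family on `M` and
`ℒ ∩ ℱ ∩ [L]^{<ω} ≠ ∅` for every infinite `L ⊆ M`, then for every infinite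
`N ⊆ M` there is an infinite `L ⊆ N` with `ℒ ∩ [L]^{<ω} ⊆ ℱ`. -/
theorem uniform_subfamily_of_hitting (F : Set (Finset ℕ)) (M : Set ℕ) (hM : M.Infinite)
    (ξ : Ordinal.{0}) (hξ : ξ.card ≤ Cardinal.aleph0)
    (𝓛 : Set (Finset ℕ)) (h𝓛 : IsUniform ξ 𝓛 M)
    (hhit : ∀ L : Set ℕ, L ⊆ M → L.Infinite → (𝓛 ∩ F ∩ FinSubs L).Nonempty) :
    ∀ N : Set ℕ, N ⊆ M → N.Infinite →
      ∃ L : Set ℕ, L ⊆ N ∧ L.Infinite ∧ 𝓛 ∩ FinSubs L ⊆ F :=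
  uniform_subfamily_of_hitting_general F M ξ 𝓛 h𝓛 hhit
end

section
/- Let M be an infinite subset of ℕ and ℒ a ξ-uniform family on M for some countable ordinal ξ. For every finite non-empty subset A of M, exactly one of the following holds: (i) there exists s ∈ ℒ such that A is a proper initial segment of s; (ii) there exists s ∈ ℒ such that s is an initial segment of A. -/
open Ordinal Filter Set

/-! Peel off the least element `m` of `A`: an initial segment relation between `A` and some
`s ∈ ℒ` forces `m` to be the least element of `s` as well, and then it is the same relation
between `A \ {m}` and `s \ {m} ∈ ℒ(m)`. Induction on the uniform family reduces everything to
`ℒ = {∅}`, where only the second alternative can hold. The induction also reaches `A = ∅`,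
which falls under the first alternative because `ℒ ≠ ∅` and `∅ ∉ ℒ`; nonemptiness is where
the infinitude of `M` enters. -/

theorem Set.Infinite.inter_Ioi_s5 {M : Set ℕ} (hM : M.Infinite) (m : ℕ) :
    (M ∩ Ioi m).Infinite := by
  rw [← compl_Iic, ← sdiff_eq]
  exact hM.sdiff (finite_Iic m)

section InitSeg

variable {s t : Finset ℕ} {m : ℕ}

theorem InitSeg.isLeast_left (h : InitSeg s t) (hs : s.Nonempty) (hm : IsLeast (↑t) m) :
    IsLeast (↑s) m := by
  obtain ⟨b, hb⟩ := hs
  exact ⟨h.2 m hm.1 b hb (hm.2 (h.1 hb)), fun a ha => hm.2 (h.1 ha)⟩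

theorem InitSeg.isLeast_right (h : InitSeg s t) (hm : IsLeast (↑s) m) : IsLeast (↑t) m :=
  ⟨h.1 hm.1, fun a ha => not_lt.mp fun ham => (not_le.mpr ham) (hm.2 (h.2 a ha m hm.1 ham.le))⟩

theorem initSeg_iff_initSeg_erase (hs : IsLeast (↑s) m) (ht : IsLeast (↑t) m) :
    InitSeg s t ↔ InitSeg (s.erase m) (t.erase m) := by
  constructor
  · rintro ⟨hst, hinit⟩
    refine ⟨Finset.erase_subset_erase m hst, fun a ha b hb hab => ?_⟩
    rw [Finset.mem_erase] at ha hb ⊢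
    exact ⟨ha.1, hinit a ha.2 b hb.2 hab⟩
  · rintro ⟨hst, hinit⟩
    refine ⟨fun a ha => ?_, fun a ha b hb hab => ?_⟩
    · rcases eq_or_ne a m with rfl | ham
      · exact ht.1
      · exact Finset.mem_of_mem_erase (hst (Finset.mem_erase.mpr ⟨ham, ha⟩))
    · rcases eq_or_ne a m with rfl | ham
      · exact hs.1
      · have hbm : b ≠ m := fun hbm => ham (le_antisymm (hbm ▸ hab) (ht.2 ha))
        exact Finset.mem_of_mem_erase
          (hinit a (Finset.mem_erase.mpr ⟨ham, ha⟩) b (Finset.mem_erase.mpr ⟨hbm, hb⟩) hab)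

theorem pInitSeg_iff_pInitSeg_erase (hs : IsLeast (↑s) m) (ht : IsLeast (↑t) m) :
    PInitSeg s t ↔ PInitSeg (s.erase m) (t.erase m) := by
  refine and_congr (initSeg_iff_initSeg_erase hs ht) (not_congr ⟨congrArg (Finset.erase · m), ?_⟩)
  intro h
  rw [← Finset.insert_erase hs.1, ← Finset.insert_erase ht.1, h]

end InitSeg

theorem exists_mem_famAt_iff {L : Set (Finset ℕ)} {m : ℕ} {P : Finset ℕ → Prop} :
    (∃ s ∈ famAt L m, P s) ↔ ∃ s ∈ L, IsLeast (↑s) m ∧ P (s.erase m) := by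
  constructor
  · rintro ⟨s, ⟨hs, hgt⟩, hP⟩
    have hms : m ∉ s := fun hm => lt_irrefl m (hgt m hm)
    refine ⟨insert m s, hs, ⟨Finset.mem_insert_self m s, fun a ha => ?_⟩, ?_⟩
    · rcases Finset.mem_insert.mp ha with rfl | ha
      · exact le_rfl
      · exact (hgt a ha).le
    · rwa [Finset.erase_insert hms]
  · rintro ⟨s, hs, hm, hP⟩
    refine ⟨s.erase m, ⟨by rwa [Finset.insert_erase hm.1], fun a ha => ?_⟩, hP⟩
    obtain ⟨ham, ha⟩ := Finset.mem_erase.mp ha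
    exact lt_of_le_of_ne (hm.2 ha) (Ne.symm ham)

section famAt

variable {L : Set (Finset ℕ)} {A : Finset ℕ} {m : ℕ}

theorem exists_pInitSeg_iff_famAt (hm : IsLeast (↑A) m) :
    (∃ s ∈ L, PInitSeg A s) ↔ ∃ s ∈ famAt L m, PInitSeg (A.erase m) s := by
  rw [exists_mem_famAt_iff]
  refine exists_congr fun s => and_congr_right fun _ => ⟨fun h => ?_, fun ⟨hs, h⟩ => ?_⟩
  · have hs := h.1.isLeast_right hm
    exact ⟨hs, (pInitSeg_iff_pInitSeg_erase hm hs).mp h⟩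
  · exact (pInitSeg_iff_pInitSeg_erase hm hs).mpr h

theorem exists_initSeg_iff_famAt (hL : ∅ ∉ L) (hm : IsLeast (↑A) m) :
    (∃ s ∈ L, InitSeg s A) ↔ ∃ s ∈ famAt L m, InitSeg s (A.erase m) := by
  rw [exists_mem_famAt_iff]
  refine exists_congr fun s => and_congr_right fun hsL => ⟨fun h => ?_, fun ⟨hs, h⟩ => ?_⟩
  · have hs := h.isLeast_left (Finset.nonempty_iff_ne_empty.mpr (ne_of_mem_of_not_mem hsL hL)) hm
    exact ⟨hs, (initSeg_iff_initSeg_erase hs hm).mp h⟩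
  · exact (initSeg_iff_initSeg_erase hs hm).mpr h

end famAt

theorem xor_initSeg_of_famAt {L : Set (Finset ℕ)} {M : Set ℕ} (hM : M.Nonempty) (hL₀ : ∅ ∉ L)
    (ih : ∀ m ∈ M, ∀ A : Finset ℕ, ↑A ⊆ M ∩ Ioi m →
      Xor (∃ s ∈ famAt L m, PInitSeg A s) (∃ s ∈ famAt L m, InitSeg s A))
    (A : Finset ℕ) (hAM : ↑A ⊆ M) :
    Xor (∃ s ∈ L, PInitSeg A s) (∃ s ∈ L, InitSeg s A) := by
  rcases A.eq_empty_or_nonempty with rfl | hA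
  · obtain ⟨s, hs⟩ : L.Nonempty := by
      obtain ⟨m, hm⟩ := hM
      obtain ⟨⟨s, hs, -⟩, -⟩ | ⟨⟨s, hs, -⟩, -⟩ := ih m hm ∅ (by simp)
      all_goals exact ⟨_, hs.1⟩
    refine Or.inl ⟨⟨s, hs, ⟨Finset.empty_subset s, by simp⟩, ?_⟩, ?_⟩
    · rintro rfl
      exact hL₀ hs
    · rintro ⟨s, hs, hs₀, -⟩
      exact hL₀ (Finset.subset_empty.mp hs₀ ▸ hs)
  · have hm := Finset.isLeast_min' A hA
    have hA' : ↑(A.erase (A.min' hA)) ⊆ M ∩ Ioi (A.min' hA) := fun a ha =>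
      ⟨hAM (Finset.mem_of_mem_erase ha), Finset.min'_lt_of_mem_erase_min' A hA ha⟩
    rw [exists_pInitSeg_iff_famAt hm, exists_initSeg_iff_famAt hL₀ hm]
    exact ih _ (hAM hm.1) _ hA'

theorem IsUniform.xor_pInitSeg_initSeg {ξ : Ordinal.{0}} {L : Set (Finset ℕ)} {M : Set ℕ}
    (h : IsUniform ξ L M) (hM : M.Infinite) (A : Finset ℕ) (hAM : ↑A ⊆ M) :
    Xor (∃ s ∈ L, PInitSeg A s) (∃ s ∈ L, InitSeg s A) := by
  induction h generalizing A with
  | zero M =>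
      refine Or.inr ⟨⟨∅, rfl, Finset.empty_subset A, by simp⟩, ?_⟩
      rintro ⟨s, rfl, hA, hne⟩
      exact hne (Finset.subset_empty.mp hA.1)
  | succ _ _ M _ hL₀ _ ih | limit _ _ M _ _ hL₀ _ _ _ _ _ ih =>
      exact xor_initSeg_of_famAt hM.nonempty hL₀
        (fun m hm A hA => ih m hm (hM.inter_Ioi_s5 m) A hA) A hAM

theorem initial_segment_dichotomy_general (M : Set ℕ) (hM : M.Infinite)
    (ξ : Ordinal.{0})
    (𝓛 : Set (Finset ℕ)) (h𝓛 : IsUniform ξ 𝓛 M)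
    (A : Finset ℕ) (hAM : ↑A ⊆ M) :
    Xor' (∃ s ∈ 𝓛, PInitSeg A s) (∃ s ∈ 𝓛, InitSeg s A) :=
  h𝓛.xor_pInitSeg_initSeg hM A hAM

/-- **Corollary 2.9.** If `ℒ` is a `ξ`-uniform family on `M` then for every
non-empty finite `A ⊆ M` exactly one of the following holds: either `A` is a
proper initial segment of some `s ∈ ℒ`, or some `s ∈ ℒ` is an initial segment
of `A`. -/
theorem initial_segment_dichotomy (M : Set ℕ) (hM : M.Infinite)
    (ξ : Ordinal.{0}) (hξ : ξ.card ≤ Cardinal.aleph0)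
    (𝓛 : Set (Finset ℕ)) (h𝓛 : IsUniform ξ 𝓛 M)
    (A : Finset ℕ) (hA : A.Nonempty) (hAM : ↑A ⊆ M) :
    Xor' (∃ s ∈ 𝓛, PInitSeg A s) (∃ s ∈ 𝓛, InitSeg s A) :=
  initial_segment_dichotomy_general M hM ξ 𝓛 h𝓛 A hAM
end

section
/- Let M be an infinite subset of ℕ and ℒ a Sperner family on M that is ξ-uniform on M for some countable ordinal ξ. Then: (i) ℒ* = ℒ_*; and (ii) for every infinite subset L of M, ℒ* ∩ [L]^{<ω} = (ℒ ∩ [L]^{<ω})* and ℒ_* ∩ [L]^{<ω} = (ℒ ∩ [L]^{<ω})_*. -/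
open Ordinal Filter Set

/-!
A `ξ`-uniform family on `M` contains an initial segment of every infinite `N ⊆ M`: peel off
`min N` and use that `ℒ(min N)` is uniform on `M ∩ (min N, ∞)`. Given `t ⊆ s ∈ ℒ` with
`t ⊆ L`, apply this to `N = t ∪ (L ∩ (max t, ∞))`. The element `s'` obtained and `t` are both
initial segments of `N`, hence comparable. If `t ⪯ s'` we are done; otherwise `s' ⪯ t ⊆ s`, and
the Sperner property forces `s' = s = t`.
-/

def InitSegSet (s : Finset ℕ) (N : Set ℕ) : Prop :=
  ↑s ⊆ N ∧ ∀ a ∈ N, ∀ b ∈ s, a ≤ b → a ∈ s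

lemma InitSegSet.initSeg_or_initSeg {s t : Finset ℕ} {N : Set ℕ}
    (hs : InitSegSet s N) (ht : InitSegSet t N) : InitSeg t s ∨ InitSeg s t := by
  by_cases hts : t ⊆ s
  · exact Or.inl ⟨hts, fun a ha b hb hab => ht.2 a (hs.1 ha) b hb hab⟩
  · obtain ⟨b, hbt, hbs⟩ := Finset.not_subset.mp hts
    have hst : s ⊆ t := fun c hc =>
      ht.2 c (hs.1 hc) b hbt (le_of_not_gt fun hbc => hbs (hs.2 b (ht.1 hbt) c hc hbc.le))
    exact Or.inr ⟨hst, fun a ha b hb hab => hs.2 a (ht.1 ha) b hb hab⟩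

lemma InitSegSet.insert_sInf {s : Finset ℕ} {N : Set ℕ} (hN : N.Nonempty)
    (hs : InitSegSet s (N ∩ Ioi (sInf N))) : InitSegSet (insert (sInf N) s) N := by
  refine ⟨?_, fun a haN b hb hab => ?_⟩
  · rw [Finset.coe_insert]
    exact insert_subset (Nat.sInf_mem hN) fun a ha => (hs.1 ha).1
  · rcases (Nat.sInf_le haN).eq_or_lt with rfl | hlt
    · exact Finset.mem_insert_self _ _
    · rcases Finset.mem_insert.mp hb with rfl | hb
      · exact absurd hab (not_le.mpr hlt)
      · exact Finset.mem_insert_of_mem (hs.2 a ⟨haN, hlt⟩ b hb hab)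

lemma exists_initSegSet_of_famAt {𝓛 : Set (Finset ℕ)} {M : Set ℕ}
    (h : ∀ m ∈ M, ∀ N ⊆ M ∩ Ioi m, N.Infinite → ∃ s ∈ famAt 𝓛 m, InitSegSet s N) :
    ∀ N ⊆ M, N.Infinite → ∃ s ∈ 𝓛, InitSegSet s N := by
  intro N hNM hN
  have hmN : sInf N ∈ N := Nat.sInf_mem hN.nonempty
  have hN' : (N ∩ Ioi (sInf N)).Infinite := by
    simpa only [sdiff_eq, compl_Iic] using hN.sdiff (finite_Iic (sInf N))
  obtain ⟨s, hs, hsN⟩ :=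
    h _ (hNM hmN) _ (fun a ha => ⟨hNM ha.1, ha.2⟩) hN'
  exact ⟨_, hs.1, hsN.insert_sInf hN.nonempty⟩

namespace IsUniform

variable {ξ : Ordinal.{0}} {𝓛 : Set (Finset ℕ)} {M : Set ℕ}

lemma subset_finSubs (h : IsUniform ξ 𝓛 M) : 𝓛 ⊆ FinSubs M := by
  cases h with
  | zero => rintro s rfl; simp [FinSubs]
  | succ _ _ _ hsub => exact hsub
  | limit _ _ _ _ hsub => exact hsub

lemma exists_initSegSet (h : IsUniform ξ 𝓛 M) :
    ∀ N ⊆ M, N.Infinite → ∃ s ∈ 𝓛, InitSegSet s N := by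
  induction h with
  | zero => exact fun N _ _ => ⟨∅, rfl, by simp [InitSegSet]⟩
  | succ _ _ _ _ _ _ ih => exact exists_initSegSet_of_famAt ih
  | limit _ _ _ _ _ _ _ _ _ _ _ ih => exact exists_initSegSet_of_famAt ih

lemma famSub_inter_subset_famStar (h : IsUniform ξ 𝓛 M) (hsp : Sperner 𝓛) {L : Set ℕ}
    (hLM : L ⊆ M) (hL : L.Infinite) :
    famSub 𝓛 ∩ FinSubs L ⊆ famStar (𝓛 ∩ FinSubs L) := by
  rintro t ⟨⟨s, hs, hts⟩, htL⟩
  set N : Set ℕ := ↑t ∪ {m ∈ L | ∀ b ∈ t, b < m}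
  have hNL : N ⊆ L := union_subset htL fun a ha => ha.1
  have hN : N.Infinite := by
    refine (hL.sdiff (finite_Iic (t.sup id))).mono fun a ha => Or.inr ⟨ha.1, fun b hb => ?_⟩
    exact (Finset.le_sup (f := id) hb).trans_lt (not_le.mp ha.2)
  have htN : InitSegSet t N := by
    refine ⟨subset_union_left, fun a ha b hb hab => ?_⟩
    rcases ha with ha | ha
    · exact ha
    · exact absurd (ha.2 b hb) (not_lt.mpr hab)
  obtain ⟨s', hs', hs'N⟩ := h.exists_initSegSet N (hNL.trans hLM) hN
  refine ⟨s', ⟨hs', hs'N.1.trans hNL⟩, ?_⟩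
  rcases hs'N.initSeg_or_initSeg htN with hts' | hs't
  · exact hts'
  · have hs's : s' = s := by
      by_contra hne
      exact hsp ⟨s', hs', s, hs, ssubset_of_subset_of_ne (hs't.1.trans hts) hne⟩
    have : t = s' := subset_antisymm (hs's ▸ hts) hs't.1
    exact this ▸ ⟨subset_rfl, fun a ha _ _ _ => ha⟩

end IsUniform

lemma famStar_subset_famSub (F : Set (Finset ℕ)) : famStar F ⊆ famSub F :=
  fun _ ⟨s, hs, hts⟩ => ⟨s, hs, hts.1⟩

lemma famStar_inter_finSubs_subset (F : Set (Finset ℕ)) (L : Set ℕ) :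
    famStar (F ∩ FinSubs L) ⊆ famStar F ∩ FinSubs L :=
  fun _ ⟨s, hs, hts⟩ => ⟨⟨s, hs.1, hts⟩, (Finset.coe_subset.mpr hts.1).trans hs.2⟩

lemma famSub_inter_finSubs_subset (F : Set (Finset ℕ)) (L : Set ℕ) :
    famSub (F ∩ FinSubs L) ⊆ famSub F ∩ FinSubs L :=
  fun _ ⟨s, hs, hts⟩ => ⟨⟨s, hs.1, hts⟩, (Finset.coe_subset.mpr hts).trans hs.2⟩

theorem sperner_star_eq_general (M : Set ℕ) (hM : M.Infinite)
    (ξ : Ordinal.{0})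
    (𝓛 : Set (Finset ℕ)) (h𝓛 : IsUniform ξ 𝓛 M) (hsp : Sperner 𝓛) :
    famStar 𝓛 = famSub 𝓛 ∧
    ∀ L : Set ℕ, L ⊆ M → L.Infinite →
      famStar 𝓛 ∩ FinSubs L = famStar (𝓛 ∩ FinSubs L) ∧
      famSub 𝓛 ∩ FinSubs L = famSub (𝓛 ∩ FinSubs L) := by
  have key {L : Set ℕ} (hLM : L ⊆ M) (hL : L.Infinite) :=
    h𝓛.famSub_inter_subset_famStar hsp hLM hL
  have hStar {L : Set ℕ} : famStar 𝓛 ∩ FinSubs L ⊆ famSub 𝓛 ∩ FinSubs L :=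
    inter_subset_inter_left _ (famStar_subset_famSub 𝓛)
  have hSubM : famSub 𝓛 ⊆ FinSubs M := fun t ⟨s, hs, hts⟩ =>
    (Finset.coe_subset.mpr hts).trans (h𝓛.subset_finSubs hs)
  refine ⟨(famStar_subset_famSub 𝓛).antisymm fun t ht => ?_, fun L hLM hL => ⟨?_, ?_⟩⟩
  · exact (famStar_inter_finSubs_subset 𝓛 M (key subset_rfl hM ⟨ht, hSubM ht⟩)).1
  · exact (hStar.trans (key hLM hL)).antisymm (famStar_inter_finSubs_subset 𝓛 L)
  · exact (key hLM hL |>.trans (famStar_subset_famSub _)).antisymm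
      (famSub_inter_finSubs_subset 𝓛 L)

/-- **Corollary 2.11.** For a Sperner `ξ`-uniform family `ℒ` on `M`:
(i) `ℒ* = ℒ_*`; (ii) for every infinite `L ⊆ M`,
`ℒ* ∩ [L]^{<ω} = (ℒ ∩ [L]^{<ω})*` and `ℒ_* ∩ [L]^{<ω} = (ℒ ∩ [L]^{<ω})_*`. -/
theorem sperner_star_eq (M : Set ℕ) (hM : M.Infinite)
    (ξ : Ordinal.{0}) (hξ : ξ.card ≤ Cardinal.aleph0)
    (𝓛 : Set (Finset ℕ)) (h𝓛 : IsUniform ξ 𝓛 M) (hsp : Sperner 𝓛) :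
    famStar 𝓛 = famSub 𝓛 ∧
    ∀ L : Set ℕ, L ⊆ M → L.Infinite →
      famStar 𝓛 ∩ FinSubs L = famStar (𝓛 ∩ FinSubs L) ∧
      famSub 𝓛 ∩ FinSubs L = famSub (𝓛 ∩ FinSubs L) :=
  sperner_star_eq_general M hM ξ 𝓛 h𝓛 hsp
end

section
/- Let ℱ be a non-empty hereditary family of finite subsets of ℕ. The following are equivalent: (i) ℱ is pointwise closed; (ii) there does not exist an infinite sequence (s_i)_{i≥1} of elements of ℱ with s₁ ≺ s₂ ≺ ⋯ (each a proper initial segment of the next); (iii) there does not exist an infinite subset M of ℕ such that [M]^{<ω} ⊆ ℱ. -/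
open Ordinal Filter Set

/-!
A strictly increasing chain `s₀ ⊂ s₁ ⊂ ⋯` converges pointwise to its union, an infinite set, so
it cannot lie in a pointwise closed family of finite sets; the initial segments of an infinite
`M` form such a chain. Conversely, every finite subset of the support of a pointwise limit of
members of a hereditary family `ℱ` belongs to `ℱ`: so the limit is in `ℱ` when its support is
finite, and its support is an infinite `M` with `[M]^{<ω} ⊆ ℱ` otherwise.
-/

open Topology

@[simp]
lemma toChar_eq_true {s : Finset ℕ} {n : ℕ} : toChar s n = true ↔ n ∈ s := by
  simp [toChar]

open Classical in
lemma tendsto_toChar_of_monotone {s : ℕ → Finset ℕ} (hs : Monotone s) :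
    Tendsto (fun i => toChar (s i)) atTop (𝓝 fun n => decide (∃ i, n ∈ s i)) := by
  rw [tendsto_pi_nhds]
  intro n
  by_cases hn : ∃ j, n ∈ s j
  · obtain ⟨j, hj⟩ := hn
    refine tendsto_const_nhds.congr' ?_
    filter_upwards [eventually_ge_atTop j] with i hi
    simp [toChar, hs hi hj, show ∃ i, n ∈ s i from ⟨j, hj⟩]
  · push Not at hn
    exact tendsto_const_nhds.congr fun i => by simp [toChar, hn]

lemma PtwiseClosed.not_strictMono {F : Set (Finset ℕ)} (hF : PtwiseClosed F)
    {s : ℕ → Finset ℕ} (hsF : ∀ i, s i ∈ F) : ¬ StrictMono s := by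
  intro hs
  have hlim := tendsto_toChar_of_monotone hs.monotone
  obtain ⟨B, -, hB⟩ := hF.mem_of_tendsto hlim (Eventually.of_forall fun i => ⟨s i, hsF i, rfl⟩)
  have hsB : ∀ i, s i ⊆ B := fun i n hn => by
    simpa [show ∃ j, n ∈ s j from ⟨i, hn⟩] using congrFun hB n
  have hcard : StrictMono fun i => (s i).card := Finset.card_strictMono.comp hs
  have hle : (s (B.card + 1)).card ≤ B.card := Finset.card_le_card (hsB (B.card + 1))
  have hge : B.card + 1 ≤ (s (B.card + 1)).card := hcard.id_le (B.card + 1)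
  omega

lemma strictMono_of_pInitSeg {s : ℕ → Finset ℕ} (hs : ∀ i, PInitSeg (s i) (s (i + 1))) :
    StrictMono s :=
  strictMono_nat_of_lt_succ fun i => (hs i).1.1.ssubset_of_ne (hs i).2

lemma initSeg_filter_range (p : ℕ → Prop) [DecidablePred p] {a b : ℕ} (hab : a ≤ b) :
    InitSeg ((Finset.range a).filter p) ((Finset.range b).filter p) := by
  refine ⟨Finset.filter_subset_filter _ (Finset.range_subset_range.mpr hab), ?_⟩
  simp only [Finset.mem_filter, Finset.mem_range]
  exact fun c hc d hd hcd => ⟨by omega, hc.2⟩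

/-- The chain `M ∩ [0, mᵢ)`, where `m₀ < m₁ < ⋯` enumerates `M`. -/
lemma exists_pInitSeg_chain_of_infinite {M : Set ℕ} (hM : M.Infinite) :
    ∃ s : ℕ → Finset ℕ, (∀ i, s i ∈ FinSubs M) ∧ ∀ i, PInitSeg (s i) (s (i + 1)) := by
  classical
  let m := Nat.nth (· ∈ M)
  refine ⟨fun i => (Finset.range (m i)).filter (· ∈ M), fun i n hn => ?_, fun i => ?_⟩
  · exact (Finset.mem_filter.mp hn).2
  have hlt : m i < m (i + 1) := Nat.nth_strictMono hM (Nat.lt_succ_self i)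
  refine ⟨initSeg_filter_range _ hlt.le, fun heq => ?_⟩
  have hmem : m i ∈ (Finset.range (m (i + 1))).filter (· ∈ M) :=
    Finset.mem_filter.mpr ⟨Finset.mem_range.mpr hlt, Nat.nth_mem_of_infinite hM i⟩
  dsimp only at heq
  rw [← heq, Finset.mem_filter, Finset.mem_range] at hmem
  exact lt_irrefl _ hmem.1

lemma Hereditary.mem_of_mem_closure {F : Set (Finset ℕ)} (hF : Hereditary F) {f : ℕ → Bool}
    (hf : f ∈ closure (toChar '' F)) {u : Finset ℕ} (hu : ∀ n ∈ u, f n = true) : u ∈ F := by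
  have hU : IsOpen ((u : Set ℕ).pi fun n => {f n}) :=
    isOpen_set_pi u.finite_toSet fun _ _ => isOpen_discrete _
  obtain ⟨_, hg, B, hBF, rfl⟩ := mem_closure_iff.mp hf _ hU fun n _ => rfl
  exact hF B hBF u fun n hn => by simpa [hu n hn] using hg n hn

lemma Hereditary.ptwiseClosed {F : Set (Finset ℕ)} (hF : Hereditary F)
    (hM : ¬ ∃ M : Set ℕ, M.Infinite ∧ FinSubs M ⊆ F) : PtwiseClosed F := by
  refine isClosed_of_closure_subset fun f hf => ?_
  have hsupp : FinSubs {n | f n = true} ⊆ F := fun u hu => hF.mem_of_mem_closure hf hu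
  obtain hfin | hinf := Set.finite_or_infinite {n | f n = true}
  · refine ⟨hfin.toFinset, hsupp hfin.coe_toFinset.subset, funext fun n => ?_⟩
    simp [toChar]
  · exact (hM ⟨_, hinf, hsupp⟩).elim

theorem closed_hereditary_characterization_general (F : Set (Finset ℕ))
    (hF : Hereditary F) :
    (PtwiseClosed F ↔
      ¬ ∃ s : ℕ → Finset ℕ, (∀ i, s i ∈ F) ∧ ∀ i, PInitSeg (s i) (s (i + 1))) ∧
    (PtwiseClosed F ↔ ¬ ∃ M : Set ℕ, M.Infinite ∧ FinSubs M ⊆ F) := by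
  have no_chain : PtwiseClosed F →
      ¬ ∃ s : ℕ → Finset ℕ, (∀ i, s i ∈ F) ∧ ∀ i, PInitSeg (s i) (s (i + 1)) :=
    fun hcl ⟨s, hsF, hs⟩ => hcl.not_strictMono hsF (strictMono_of_pInitSeg hs)
  have chain_of_finSubs : (∃ M : Set ℕ, M.Infinite ∧ FinSubs M ⊆ F) →
      ∃ s : ℕ → Finset ℕ, (∀ i, s i ∈ F) ∧ ∀ i, PInitSeg (s i) (s (i + 1)) := by
    rintro ⟨M, hM, hMF⟩
    obtain ⟨s, hsM, hs⟩ := exists_pInitSeg_chain_of_infinite hM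
    exact ⟨s, fun i => hMF (hsM i), hs⟩
  exact ⟨⟨no_chain, fun h => hF.ptwiseClosed (mt chain_of_finSubs h)⟩,
    ⟨fun hcl => mt chain_of_finSubs (no_chain hcl), hF.ptwiseClosed⟩⟩

/-- **Proposition 2.14.** For a non-empty hereditary family `ℱ` of finite
subsets of `ℕ` the following are equivalent: (i) `ℱ` is pointwise closed;
(ii) there is no sequence `(s_i)` in `ℱ` with each `s_i` a proper initial
segment of `s_{i+1}`; (iii) there is no infinite `M ⊆ ℕ` with
`[M]^{<ω} ⊆ ℱ`. -/
theorem closed_hereditary_characterization (F : Set (Finset ℕ))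
    (hne : F.Nonempty) (hF : Hereditary F) :
    (PtwiseClosed F ↔
      ¬ ∃ s : ℕ → Finset ℕ, (∀ i, s i ∈ F) ∧ ∀ i, PInitSeg (s i) (s (i + 1))) ∧
    (PtwiseClosed F ↔ ¬ ∃ M : Set ℕ, M.Infinite ∧ FinSubs M ⊆ F) :=
  closed_hereditary_characterization_general F hF
end

section
/- Let β be a countable ordinal and let ℒ be a family of finite subsets of ℕ such that ℒ_* and (ℒ(n))_* are pointwise closed for every n ∈ ℕ. If A is a non-empty finite set with A ∈ (ℒ_*)^β_M for some infinite subset M of ℕ, then there exist ℓ ∈ ℕ with ℓ ≤ min A and an infinite subset L of M such that A \ {ℓ} ∈ ((ℒ(ℓ))_*)^β_L. -/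
open Ordinal Filter Set

/-!
By induction on `β`. For a hereditary family `F` the strong derivative is combinatorial:
`A ∈ (F)^1_M` iff `A ∈ F`, `A ⊆ M` and every infinite `L ⊆ M` contains infinitely many `x`
with `A ∪ {x} ∈ F`. In the successor and limit cases `A ∈ ((ℒ_*)^{o_k}_M)^1_M` for ordinals
`o_k < β`, constant resp. cofinal in `β` (this is where countability of `β` enters).
A fusion argument picks `b_0 < b_1 < ⋯` and infinite sets `L_0, L_1, …` with `b_k ∈ L_j ∪ A`
for `j < k`, where the induction hypothesis applied to `A ∪ {b_k}` at `o_k` yields `ℓ_k ≤ min A`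
with `(A ∪ {b_k}) \ {ℓ_k} ∈ ((ℒ(ℓ_k))_*)^{o_k}_{L_k}`. Some value `ℓ` of `ℓ_k` repeats along an
infinite set `K`, and `L = A ∪ {b_k : k ∈ K}` differs from every `L_k` by a finite set, which the
derivatives do not see.
-/

open Topology

lemma toChar_injective : Function.Injective toChar := fun s t h =>
  Finset.ext fun n => by simpa [toChar] using congrFun h n

lemma nhds_hasBasis_cylinder {E : ℕ → Type*} [∀ n, TopologicalSpace (E n)]
    [∀ n, DiscreteTopology (E n)] (x : ∀ n, E n) :
    (𝓝 x).HasBasis (fun _ : ℕ => True) (PiNat.cylinder x) :=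
  ⟨fun s => by
    rw [(PiNat.isTopologicalBasis_cylinders E).mem_nhds_iff]
    constructor
    · rintro ⟨_, ⟨y, n, rfl⟩, hx, hs⟩
      exact ⟨n, trivial, PiNat.mem_cylinder_iff_eq.1 hx ▸ hs⟩
    · rintro ⟨n, -, hs⟩
      exact ⟨_, ⟨x, n, rfl⟩, PiNat.self_mem_cylinder x n, hs⟩⟩

lemma accPt_toChar_iff (A : Finset ℕ) (S : Set (Finset ℕ)) :
    AccPt (toChar A) (𝓟 (toChar '' S)) ↔
      ∀ n, ∃ B ∈ S, B ≠ A ∧ ∀ i < n, (i ∈ B ↔ i ∈ A) := by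
  rw [accPt_iff_frequently, (nhds_hasBasis_cylinder _).frequently_iff]
  refine forall_congr' fun n => ?_
  simp only [true_imp_iff, PiNat.mem_cylinder_iff, mem_image]
  constructor
  · rintro ⟨_, hB, hBA, B, hS, rfl⟩
    exact ⟨B, hS, fun h => hBA (h ▸ rfl), fun i hi => by simpa [toChar] using hB i hi⟩
  · rintro ⟨B, hS, hBA, hB⟩
    exact ⟨toChar B, fun i hi => by simpa [toChar] using hB i hi,
      toChar_injective.ne hBA, B, hS, rfl⟩

lemma derivOne_subset (M : Set ℕ) (F : Set (Finset ℕ)) : derivOne M F ⊆ F :=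
  fun _ hA => hA.1

lemma accPt_toChar_iff_infinite {F : Set (Finset ℕ)} (hF : Hereditary F) (A : Finset ℕ)
    (L : Set ℕ) :
    AccPt (toChar A) (𝓟 (toChar '' {B | B ∈ F ∧ ↑B ⊆ ↑A ∪ L})) ↔
      {x | x ∈ L ∧ insert x A ∈ F}.Infinite := by
  rw [accPt_toChar_iff]
  obtain ⟨m, hAm⟩ := A.exists_nat_subset_range
  constructor
  · refine fun h => infinite_of_forall_exists_gt fun a => ?_
    obtain ⟨B, ⟨hBF, hBL⟩, hBA, hagree⟩ := h (max m (a + 1))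
    have hAB : A ⊆ B := fun i hi =>
      (hagree i (lt_max_of_lt_left (Finset.mem_range.1 (hAm hi)))).2 hi
    obtain ⟨x, hxB, hxA⟩ := Finset.exists_of_ssubset (hAB.ssubset_of_ne (Ne.symm hBA))
    have hx : max m (a + 1) ≤ x := not_lt.1 fun hx => hxA ((hagree x hx).1 hxB)
    exact ⟨x, ⟨(hBL hxB).resolve_left hxA, hF B hBF _ (Finset.insert_subset hxB hAB)⟩,
      by omega⟩
  · intro h n
    obtain ⟨x, ⟨hxL, hxF⟩, hx⟩ := h.exists_gt (max m n)
    have hxA : x ∉ A := fun hxA => by have := Finset.mem_range.1 (hAm hxA); omega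
    refine ⟨insert x A, ⟨hxF, ?_⟩, fun h => hxA (h ▸ Finset.mem_insert_self x A),
      fun i hi => ?_⟩
    · rw [Finset.coe_insert]
      exact insert_subset (Or.inr hxL) subset_union_left
    · rw [Finset.mem_insert, or_iff_right (by omega)]

lemma mem_derivOne_iff {F : Set (Finset ℕ)} (hF : Hereditary F) {M : Set ℕ} {A : Finset ℕ} :
    A ∈ derivOne M F ↔
      A ∈ F ∧ ↑A ⊆ M ∧ ∀ L ⊆ M, L.Infinite → {x | x ∈ L ∧ insert x A ∈ F}.Infinite := by
  simp only [derivOne, mem_ofPred_eq, accPt_toChar_iff_infinite hF]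

lemma hereditary_famSub (𝓛 : Set (Finset ℕ)) : Hereditary (famSub 𝓛) :=
  fun _ ⟨u, hu, hsu⟩ _ hts => ⟨u, hu, hts.trans hsu⟩

lemma hereditary_derivOne {F : Set (Finset ℕ)} (hF : Hereditary F) (M : Set ℕ) :
    Hereditary (derivOne M F) := by
  intro A hA A' hA'
  rw [mem_derivOne_iff hF] at hA ⊢
  obtain ⟨hAF, hAM, hinf⟩ := hA
  refine ⟨hF A hAF A' hA', (Finset.coe_subset.2 hA').trans hAM,
    fun L hLM hL => (hinf L hLM hL).mono ?_⟩
  exact fun x ⟨hxL, hx⟩ => ⟨hxL, hF _ hx _ (Finset.insert_subset_insert x hA')⟩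

lemma mem_derivOne_of_diff_finite {M L : Set ℕ} (hLM : (L \ M).Finite) {F G : Set (Finset ℕ)}
    (hFG : ∀ B ∈ F, ↑B ⊆ L → B ∈ G) {A : Finset ℕ} (hA : A ∈ derivOne M F) (hAL : ↑A ⊆ L) :
    A ∈ derivOne L G := by
  obtain ⟨hAF, -, hacc⟩ := hA
  refine ⟨hFG A hAF hAL, hAL, fun L' hL'L hL' => ?_⟩
  have hL'M : (L' ∩ M).Infinite :=
    (hL'.sdiff (hLM.subset (sdiff_subset_sdiff_left hL'L))).mono fun x hx =>
      ⟨hx.1, by_contra fun h => hx.2 ⟨hx.1, h⟩⟩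
  refine (hacc _ inter_subset_right hL'M).mono (principal_mono.2 (image_mono ?_))
  rintro B ⟨hBF, hB⟩
  have hB' : ↑B ⊆ ↑A ∪ L' := hB.trans (union_subset_union_right _ inter_subset_left)
  exact ⟨hFG B hBF (hB'.trans (union_subset hAL hL'L)), hB'⟩

section CBDeriv

variable (F : Set (Finset ℕ)) (M : Set ℕ)

lemma CBDeriv_zero : CBDeriv F M 0 = F :=
  Ordinal.limitRecOn_zero _ _ _

lemma CBDeriv_add_one (o : Ordinal.{0}) :
    CBDeriv F M (o + 1) = derivOne M (CBDeriv F M o) :=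
  Ordinal.limitRecOn_add_one _ _ _ _

lemma CBDeriv_limit {o : Ordinal.{0}} (ho : Order.IsSuccLimit o) :
    CBDeriv F M o = ⋂ (β : Ordinal.{0}) (_ : β < o), CBDeriv F M β :=
  Ordinal.limitRecOn_limit _ _ _ _ ho

lemma CBDeriv_antitone : Antitone (CBDeriv F M) := by
  intro γ δ hγδ
  induction δ using Ordinal.limitRecOn with
  | zero => rw [nonpos_iff_eq_zero.1 hγδ]
  | add_one ξ ih =>
    rcases hγδ.lt_or_eq with hlt | rfl
    · rw [CBDeriv_add_one]
      exact (derivOne_subset M _).trans (ih (Order.lt_add_one_iff.1 hlt))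
    · exact subset_rfl
  | limit δ hδ ih =>
    rcases hγδ.eq_or_lt with rfl | hlt
    · exact subset_rfl
    · rw [CBDeriv_limit F M hδ]
      exact iInter₂_subset γ hlt

variable {F} in
lemma hereditary_CBDeriv (hF : Hereditary F) (β : Ordinal.{0}) :
    Hereditary (CBDeriv F M β) := by
  induction β using Ordinal.limitRecOn with
  | zero => rwa [CBDeriv_zero]
  | add_one ξ ih =>
    rw [CBDeriv_add_one]
    exact hereditary_derivOne ih M
  | limit β hβ ih =>
    rw [CBDeriv_limit F M hβ]
    intro s hs t hts
    rw [mem_iInter₂] at hs ⊢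
    exact fun γ hγ => ih γ hγ s (hs γ hγ) t hts

variable {M} in
lemma mem_CBDeriv_of_diff_finite {L : Set ℕ} (hLM : (L \ M).Finite) (β : Ordinal.{0}) :
    ∀ A ∈ CBDeriv F M β, ↑A ⊆ L → A ∈ CBDeriv F L β := by
  induction β using Ordinal.limitRecOn with
  | zero =>
    simp only [CBDeriv_zero]
    exact fun A hA _ => hA
  | add_one ξ ih =>
    simp only [CBDeriv_add_one]
    exact fun A hA hAL => mem_derivOne_of_diff_finite hLM ih hA hAL
  | limit β hβ ih =>
    simp only [CBDeriv_limit F _ hβ, mem_iInter₂]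
    exact fun A hA hAL γ hγ => ih γ hγ A (hA γ hγ) hAL

end CBDeriv

lemma exists_fusion_seq {A M : Set ℕ} (hM : M.Infinite) (hAM : A ⊆ M)
    (Q : ℕ → ℕ → Set ℕ → Prop)
    (step : ∀ k N, N ⊆ M → N.Infinite → A ⊆ N → ∀ n,
      ∃ x ∈ N, n < x ∧ ∃ L ⊆ N, L.Infinite ∧ Q k x L) :
    ∃ (b : ℕ → ℕ) (L : ℕ → Set ℕ), StrictMono b ∧ (∀ k, b k ∈ M) ∧
      (∀ j k, j < k → b k ∈ L j ∪ A) ∧ ∀ k, Q k (b k) (L k) := by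
  let Adm := {N : Set ℕ // N ⊆ M ∧ N.Infinite ∧ A ⊆ N}
  have step' : ∀ k (N : Adm) n, ∃ x L, (x ∈ N.1 ∧ n < x) ∧ L ⊆ N.1 ∧ L.Infinite ∧ Q k x L :=
    fun k N n => by
      obtain ⟨x, hxN, hnx, L, hLN, hL, hQ⟩ := step k N.1 N.2.1 N.2.2.1 N.2.2.2 n
      exact ⟨x, L, ⟨hxN, hnx⟩, hLN, hL, hQ⟩
  choose x L hx hL using step'
  -- the state after stage `k`: the set `L_k ∪ A` to choose from next, and the lower bound `b_k`
  let next (k : ℕ) (p : Adm × ℕ) : Adm × ℕ :=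
    (⟨L k p.1 p.2 ∪ A, union_subset ((hL k p.1 p.2).1.trans p.1.2.1) hAM,
      (hL k p.1 p.2).2.1.mono subset_union_left, subset_union_right⟩, x k p.1 p.2)
  let s (k : ℕ) : Adm × ℕ :=
    Nat.rec (motive := fun _ => Adm × ℕ) (⟨M, subset_rfl, hM, hAM⟩, 0) next k
  have hanti : Antitone fun k => (s k).1.1 :=
    antitone_nat_of_succ_le fun k => union_subset (hL k _ _).1 (s k).1.2.2.2
  exact ⟨fun k => x k (s k).1 (s k).2, fun k => L k (s k).1 (s k).2,
    strictMono_nat_of_lt_succ fun k => (hx (k + 1) _ _).2, fun k => (s k).1.2.1 (hx k _ _).1,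
    fun _ k hjk => hanti hjk (hx k _ _).1, fun k => (hL k _ _).2.2⟩

lemma union_image_sdiff_finite {A : Set ℕ} (hA : A.Finite) {b : ℕ → ℕ} {L : ℕ → Set ℕ}
    (hbL : ∀ j k, j < k → b k ∈ L j ∪ A) (K : Set ℕ) (k : ℕ) :
    ((A ∪ b '' K) \ L k).Finite := by
  refine (hA.union ((finite_Iic k).image b)).subset fun x ⟨hx, hxL⟩ => ?_
  rcases hx with hxA | ⟨i, -, rfl⟩
  · exact Or.inl hxA
  · rcases le_or_gt i k with hik | hki
    · exact Or.inr (mem_image_of_mem b hik)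
    · exact Or.inl ((hbL k i hki).resolve_left hxL)

lemma exists_infinite_fiber_of_le {f : ℕ → ℕ} {m : ℕ} (hf : ∀ k, f k ≤ m) :
    ∃ ℓ ≤ m, (f ⁻¹' {ℓ}).Infinite := by
  obtain ⟨ℓ, hℓ⟩ := Finite.exists_infinite_fiber
    fun k => (⟨f k, Nat.lt_succ_of_le (hf k)⟩ : Fin (m + 1))
  refine ⟨ℓ, Nat.le_of_lt_succ ℓ.2, ?_⟩
  convert infinite_coe_iff.1 hℓ using 1
  ext k
  simp [Fin.ext_iff]

lemma exists_monotone_cofinal_of_countable {α : Type*} [LinearOrder α] {β : α}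
    (hne : (Iio β).Nonempty) (hcount : (Iio β).Countable) :
    ∃ o : ℕ → α, Monotone o ∧ (∀ k, o k < β) ∧ ∀ δ < β, ∃ k, δ ≤ o k := by
  obtain ⟨e, he⟩ := hcount.exists_eq_range hne
  have he_lt : ∀ k, e k < β := fun k => (he ▸ mem_range_self k : e k ∈ Iio β)
  refine ⟨partialSups e, (partialSups e).monotone,
    fun k => (partialSups_iff_forall (· < β) sup_lt_iff).2 fun j _ => he_lt j, fun δ hδ => ?_⟩
  obtain ⟨k, rfl⟩ : δ ∈ range e := he ▸ hδ
  exact ⟨k, le_partialSups e k⟩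

lemma countable_Iio_of_card_le_aleph0 {β : Ordinal.{0}} (hβ : β.card ≤ Cardinal.aleph0) :
    (Iio β).Countable := by
  rw [← countable_coe_iff, ← Cardinal.mk_le_aleph0_iff, Cardinal.mk_Iio_ordinal]
  exact Cardinal.lift_le_aleph0.2 hβ

def DerivErases (𝓛 : Set (Finset ℕ)) (β : Ordinal.{0}) : Prop :=
  ∀ (A : Finset ℕ) (hA : A.Nonempty) (M : Set ℕ), M.Infinite → A ∈ CBDeriv (famSub 𝓛) M β →
    ∃ ℓ ≤ A.min' hA, ∃ L ⊆ M, L.Infinite ∧ A.erase ℓ ∈ CBDeriv (famSub (famAt 𝓛 ℓ)) L β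

section DerivErases

variable {𝓛 : Set (Finset ℕ)}

lemma derivErases_zero : DerivErases 𝓛 0 := by
  intro A hA M hM hAd
  simp only [CBDeriv_zero] at hAd ⊢
  obtain ⟨s, hs, hAs⟩ := hAd
  have hsne : s.Nonempty := hA.mono hAs
  refine ⟨s.min' hsne, Finset.min'_subset hA hAs, M, subset_rfl, hM,
    s.erase (s.min' hsne), ⟨?_, fun a ha => s.min'_lt_of_mem_erase_min' hsne ha⟩,
    Finset.erase_subset_erase _ hAs⟩
  rwa [Finset.insert_erase (s.min'_mem hsne)]

lemma DerivErases.exists_insert_mem {ξ : Ordinal.{0}} (ih : DerivErases 𝓛 ξ) {A : Finset ℕ}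
    (hA : A.Nonempty) {M N : Set ℕ} (hNM : N ⊆ M) (hN : N.Infinite) (hAN : ↑A ⊆ N)
    (hAd : A ∈ derivOne M (CBDeriv (famSub 𝓛) M ξ)) (n : ℕ) :
    ∃ x ∈ N, n < x ∧ ∃ L ⊆ N, L.Infinite ∧
      ∃ ℓ ≤ A.min' hA, insert x (A.erase ℓ) ∈ CBDeriv (famSub (famAt 𝓛 ℓ)) L ξ := by
  obtain ⟨x, ⟨hxN, hxA⟩, hx⟩ :=
    (((mem_derivOne_iff (hereditary_CBDeriv M (hereditary_famSub 𝓛) ξ)).1 hAd).2.2 N hNM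
      hN).exists_gt (max n (A.max' hA))
  have hxA' : insert x A ∈ CBDeriv (famSub 𝓛) N ξ :=
    mem_CBDeriv_of_diff_finite _ (by simp [sdiff_eq_empty.2 hNM]) ξ _ hxA
      (by rw [Finset.coe_insert]; exact insert_subset hxN hAN)
  obtain ⟨ℓ, hℓ, L, hLN, hL, hmem⟩ := ih _ (Finset.insert_nonempty x A) N hN hxA'
  have hℓA : ℓ ≤ A.min' hA := hℓ.trans (Finset.min'_subset _ (Finset.subset_insert x A))
  have hxℓ : x ≠ ℓ := by
    have := A.min'_le_max' hA
    omega
  rw [Finset.erase_insert_of_ne hxℓ] at hmem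
  exact ⟨x, hxN, (le_max_left _ _).trans_lt hx, L, hLN, hL, ℓ, hℓA, hmem⟩

lemma exists_erase_eventually_mem {o : ℕ → Ordinal.{0}} (ih : ∀ k, DerivErases 𝓛 (o k))
    {A : Finset ℕ} (hA : A.Nonempty) {M : Set ℕ} (hM : M.Infinite)
    (hAd : ∀ k, A ∈ derivOne M (CBDeriv (famSub 𝓛) M (o k))) :
    ∃ ℓ ≤ A.min' hA, ∃ L ⊆ M, L.Infinite ∧ ↑(A.erase ℓ) ⊆ L ∧ ∀ j, ∀ᶠ x in cofinite,
      x ∈ L → ∃ k ≥ j, insert x (A.erase ℓ) ∈ CBDeriv (famSub (famAt 𝓛 ℓ)) L (o k) := by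
  have hAM : ↑A ⊆ M := (hAd 0).2.1
  obtain ⟨b, Ls, hb, hbM, hbLs, hQ⟩ := exists_fusion_seq hM hAM
    (fun k x L => ∃ ℓ ≤ A.min' hA, insert x (A.erase ℓ) ∈ CBDeriv (famSub (famAt 𝓛 ℓ)) L (o k))
    fun k _ hNM hN hAN => (ih k).exists_insert_mem hA hNM hN hAN (hAd k)
  choose ℓf hℓf hmem using hQ
  obtain ⟨ℓ, hℓ, hK⟩ := exists_infinite_fiber_of_le hℓf
  set K := ℓf ⁻¹' {ℓ}
  have hAℓ : ↑(A.erase ℓ) ⊆ (↑A : Set ℕ) := Finset.coe_subset.2 (A.erase_subset ℓ)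
  refine ⟨ℓ, hℓ, ↑A ∪ b '' K, union_subset hAM (image_subset_iff.2 fun k _ => hbM k),
    (hK.image hb.injective.injOn).mono subset_union_right, hAℓ.trans subset_union_left,
    fun j => eventually_cofinite.2 ?_⟩
  refine (A.finite_toSet.union ((finite_Iio j).image b)).subset fun x hx => ?_
  simp only [mem_ofPred_eq, Classical.not_imp, not_exists, not_and] at hx
  obtain ⟨hxA | ⟨k, hkK, rfl⟩, hxk⟩ := hx
  · exact Or.inl hxA
  refine Or.inr (mem_image_of_mem b (not_le.1 fun hjk => hxk k hjk ?_))
  have hk := hmem k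
  rw [show ℓf k = ℓ from hkK] at hk
  refine mem_CBDeriv_of_diff_finite _ (union_image_sdiff_finite A.finite_toSet hbLs K k) _ _ hk ?_
  rw [Finset.coe_insert]
  exact insert_subset (Or.inr (mem_image_of_mem b hkK)) (hAℓ.trans subset_union_left)

lemma DerivErases.add_one {ξ : Ordinal.{0}} (h : DerivErases 𝓛 ξ) : DerivErases 𝓛 (ξ + 1) := by
  intro A hA M hM hAd
  rw [CBDeriv_add_one] at hAd
  obtain ⟨ℓ, hℓ, L, hLM, hL, hAL, hev⟩ :=
    exists_erase_eventually_mem (o := fun _ => ξ) (fun _ => h) hA hM fun _ => hAd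
  have hered := hereditary_CBDeriv L (hereditary_famSub (famAt 𝓛 ℓ)) ξ
  have hev' : ∀ᶠ x in cofinite, x ∈ L → insert x (A.erase ℓ) ∈ CBDeriv _ L ξ :=
    (hev 0).mono fun x hx hxL => (hx hxL).choose_spec.2
  have hfreq : ∀ L' ⊆ L, L'.Infinite →
      ∃ᶠ x in cofinite, x ∈ L' ∧ insert x (A.erase ℓ) ∈ CBDeriv _ L ξ := fun L' hL'L hL' =>
    (frequently_cofinite_mem_iff_infinite.2 hL').and_eventually hev' |>.mono
      fun x ⟨hxL', hx⟩ => ⟨hxL', hx (hL'L hxL')⟩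
  obtain ⟨x, -, hx⟩ := (hfreq L subset_rfl hL).exists
  refine ⟨ℓ, hℓ, L, hLM, hL, ?_⟩
  rw [CBDeriv_add_one, mem_derivOne_iff hered]
  exact ⟨hered _ hx _ (Finset.subset_insert _ _), hAL, fun L' hL'L hL' =>
    frequently_cofinite_iff_infinite.1 (hfreq L' hL'L hL')⟩

lemma DerivErases.of_isSuccLimit {β : Ordinal.{0}} (hβ : Order.IsSuccLimit β)
    (hcount : (Iio β).Countable) (ih : ∀ δ < β, DerivErases 𝓛 δ) : DerivErases 𝓛 β := by
  obtain ⟨o, ho_mono, ho_lt, ho_cof⟩ :=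
    exists_monotone_cofinal_of_countable ⟨0, hβ.bot_lt⟩ hcount
  intro A hA M hM hAd
  have hAd' : ∀ k, A ∈ derivOne M (CBDeriv (famSub 𝓛) M (o k)) := fun k => by
    rw [← CBDeriv_add_one]
    exact CBDeriv_antitone _ _ (hβ.add_one_lt (ho_lt k)).le hAd
  obtain ⟨ℓ, hℓ, L, hLM, hL, -, hev⟩ :=
    exists_erase_eventually_mem (fun k => ih _ (ho_lt k)) hA hM hAd'
  refine ⟨ℓ, hℓ, L, hLM, hL, ?_⟩
  rw [CBDeriv_limit _ _ hβ, mem_iInter₂]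
  intro δ hδ
  obtain ⟨j, hj⟩ := ho_cof δ hδ
  obtain ⟨x, hx, hxL⟩ :=
    ((hev j).and_frequently (frequently_cofinite_mem_iff_infinite.2 hL)).exists
  obtain ⟨k, hjk, hxk⟩ := hx hxL
  exact hereditary_CBDeriv L (hereditary_famSub _) δ _
    (CBDeriv_antitone _ _ (hj.trans (ho_mono hjk)) hxk) _ (Finset.subset_insert _ _)

theorem derivErases_of_card_le_aleph0 (𝓛 : Set (Finset ℕ)) (β : Ordinal.{0})
    (hβ : β.card ≤ Cardinal.aleph0) : DerivErases 𝓛 β := by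
  induction β using Ordinal.limitRecOn with
  | zero => exact derivErases_zero
  | add_one ξ ih => exact (ih ((Ordinal.card_le_card le_self_add).trans hβ)).add_one
  | limit β hlim ih =>
    exact .of_isSuccLimit hlim (countable_Iio_of_card_le_aleph0 hβ)
      fun δ hδ => ih δ hδ ((Ordinal.card_le_card hδ.le).trans hβ)

end DerivErases

theorem deriv_erase_general (β : Ordinal.{0}) (hβ : β.card ≤ Cardinal.aleph0)
    (𝓛 : Set (Finset ℕ))
    (A : Finset ℕ) (hA : A.Nonempty) (M : Set ℕ) (hM : M.Infinite)
    (hAd : A ∈ CBDeriv (famSub 𝓛) M β) :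
    ∃ ℓ : ℕ, ℓ ≤ A.min' hA ∧
      ∃ L : Set ℕ, L ⊆ M ∧ L.Infinite ∧
        A.erase ℓ ∈ CBDeriv (famSub (famAt 𝓛 ℓ)) L β :=
  derivErases_of_card_le_aleph0 𝓛 β hβ A hA M hM hAd

/-- **Lemma 1.15.** If `ℒ_*` and every `(ℒ(n))_*` are pointwise closed,
`A ≠ ∅` and `A ∈ (ℒ_*)^β_M`, then there are `ℓ ≤ min A` and an infinite
`L ⊆ M` with `A \ {ℓ} ∈ ((ℒ(ℓ))_*)^β_L`. -/
theorem deriv_erase (β : Ordinal.{0}) (hβ : β.card ≤ Cardinal.aleph0)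
    (𝓛 : Set (Finset ℕ)) (hc : PtwiseClosed (famSub 𝓛))
    (hcn : ∀ n : ℕ, PtwiseClosed (famSub (famAt 𝓛 n)))
    (A : Finset ℕ) (hA : A.Nonempty) (M : Set ℕ) (hM : M.Infinite)
    (hAd : A ∈ CBDeriv (famSub 𝓛) M β) :
    ∃ ℓ : ℕ, ℓ ≤ A.min' hA ∧
      ∃ L : Set ℕ, L ⊆ M ∧ L.Infinite ∧
        A.erase ℓ ∈ CBDeriv (famSub (famAt 𝓛 ℓ)) L β :=
  deriv_erase_general β hβ 𝓛 A hA M hM hAd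
end
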